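/- arXiv:2304.14105 — 4 statements merged into one kernel-verified Lean document; each statement's English description precedes it below -/
import Mathlib

section
/- Let K be a field and let q, y ∈ K and k ∈ ℕ be such that q ≠ 1, and all the quantities 1 − y·qⁱ for −k ≤ i ≤ k, 1 − q^{k+1}·y, and 1 − q^k·y⁻¹ are nonzero (and y, q are units). Then Σ_{i=−k}^{k} 1/((1 − y·qⁱ)·(1 − q^{−i−1}·y⁻¹)) = q·(q^{2k+1} − 1) / ((1 − q^{k+1}·y)·(1 − q^k·y⁻¹)·(q − 1)). -/
private lemma tel_aux {K : Type*} [AddCommGroup K] (f : ℤ → K) (a : ℤ) :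
    ∀ n : ℕ, ∑ i ∈ Finset.Icc a (a + n), (f i - f (i + 1)) = f a - f (a + n + 1) := by
  intro n
  induction n with
  | zero => simp
  | succ n ih =>
    have hc : a + ((n + 1 : ℕ) : ℤ) = a + n + 1 := by push_cast; ring
    rw [hc]
    have hset : Finset.Icc a (a + (n : ℤ) + 1) =
        insert (a + (n : ℤ) + 1) (Finset.Icc a (a + n)) := by
      ext x
      simp only [Finset.mem_Icc, Finset.mem_insert]
      omega
    rw [hset, Finset.sum_insert (by simp), ih]
    abel

private lemma term_eq {K : Type*} [Field K] (q y : K) (i : ℤ)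
    (hq0 : q ≠ 0) (hy0 : y ≠ 0) (hq1' : q - 1 ≠ 0)
    (hA : 1 - q ^ i * y ≠ 0) (hB : 1 - q ^ (i + 1) * y ≠ 0) :
    1 / ((1 - y * q ^ i) * (1 - q ^ (-i - 1) * y⁻¹)) =
      q / (q - 1) * (1 / (1 - q ^ i * y) - 1 / (1 - q ^ (i + 1) * y)) := by
  have ht : (q : K) ^ i ≠ 0 := zpow_ne_zero i hq0
  have he : q ^ (-i - 1) = (q ^ i * q)⁻¹ := by
    rw [show -i - 1 = -(i + 1) by ring, zpow_neg, zpow_add_one₀ hq0]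
  rw [he, zpow_add_one₀ hq0] at *
  have hA' : 1 - y * q ^ i ≠ 0 := by rwa [mul_comm y]
  have htqy : q ^ i * q * y - 1 ≠ 0 := fun h => hB (by linear_combination -h)
  have hC : 1 - (q ^ i * q)⁻¹ * y⁻¹ = (q ^ i * q * y - 1) / (q ^ i * q * y) := by
    field_simp
  rw [hC, div_sub_div _ _ hA hB, div_mul_div_comm, ← mul_div_assoc, one_div_div,
    div_eq_div_iff (mul_ne_zero hA' htqy) (mul_ne_zero hq1' (mul_ne_zero hA hB))]
  ring

/-- The finite-sum identity (B.1) of the paper: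
`∑_{i=-k}^{k} 1/((1 - y qⁱ)(1 - q^{-i-1} y⁻¹))
  = q (q^{2k+1} - 1) / ((1 - q^{k+1} y)(1 - q^k y⁻¹)(q - 1))`
over an arbitrary field, with `q, y` invertible and all denominators nonzero. -/
theorem finite_sum_identity_h0 {K : Type*} [Field K] (q y : K) (k : ℕ)
    (hq0 : q ≠ 0) (hy0 : y ≠ 0) (hq1 : q ≠ 1)
    (h1 : ∀ i : ℤ, -(k : ℤ) ≤ i → i ≤ (k : ℤ) → 1 - y * q ^ i ≠ 0)
    (h2 : 1 - q ^ ((k : ℤ) + 1) * y ≠ 0)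
    (h3 : 1 - q ^ (k : ℤ) * y⁻¹ ≠ 0) :
    ∑ i ∈ Finset.Icc (-(k : ℤ)) (k : ℤ),
        1 / ((1 - y * q ^ i) * (1 - q ^ (-i - 1) * y⁻¹)) =
      q * (q ^ (2 * (k : ℤ) + 1) - 1) /
        ((1 - q ^ ((k : ℤ) + 1) * y) * (1 - q ^ (k : ℤ) * y⁻¹) * (q - 1)) := by
  have hq1' : q - 1 ≠ 0 := sub_ne_zero.mpr hq1
  have hstep : ∑ i ∈ Finset.Icc (-(k : ℤ)) (k : ℤ),
      1 / ((1 - y * q ^ i) * (1 - q ^ (-i - 1) * y⁻¹)) =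
      ∑ i ∈ Finset.Icc (-(k : ℤ)) (k : ℤ),
      q / (q - 1) * (1 / (1 - q ^ i * y) - 1 / (1 - q ^ (i + 1) * y)) := by
    apply Finset.sum_congr rfl
    intro i hi
    rw [Finset.mem_Icc] at hi
    have hA : 1 - q ^ i * y ≠ 0 := by
      rw [mul_comm]; exact h1 i hi.1 hi.2
    have hB : 1 - q ^ (i + 1) * y ≠ 0 := by
      rcases eq_or_lt_of_le hi.2 with h | h
      · rw [h]; exact h2
      · rw [mul_comm]; exact h1 (i + 1) (by omega) (by omega)
    exact term_eq q y i hq0 hy0 hq1' hA hB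
  rw [hstep, ← Finset.mul_sum]
  have htel := tel_aux (fun i => 1 / (1 - q ^ i * y)) (-(k : ℤ)) (2 * k)
  rw [show (-(k:ℤ) + (2*k : ℕ)) = (k:ℤ) by push_cast; ring] at htel
  rw [htel]
  have ht : (q : K) ^ (k:ℤ) ≠ 0 := zpow_ne_zero _ hq0
  have hfk : 1 - q ^ (-(k:ℤ)) * y ≠ 0 := by
    rw [mul_comm]; exact h1 (-(k:ℤ)) le_rfl (by omega)
  rw [zpow_neg] at hfk
  have hty : q ^ (k:ℤ) - y ≠ 0 := by
    have e : q ^ (k:ℤ) - y = q ^ (k:ℤ) * (1 - (q ^ (k:ℤ))⁻¹ * y) := by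
      field_simp
    rw [e]; exact mul_ne_zero ht hfk
  have hyt : y - q ^ (k:ℤ) ≠ 0 := fun h => hty (by linear_combination -h)
  rw [show (2 * (k:ℤ) + 1) = ((k:ℤ) + (k:ℤ)) + 1 by ring]
  rw [zpow_add_one₀ hq0, zpow_add_one₀ hq0, zpow_add₀ hq0, zpow_neg] at *
  have hB : 1 - q ^ (k:ℤ) * q * y ≠ 0 := h2
  have e1 : 1 - (q ^ (k:ℤ))⁻¹ * y = (q ^ (k:ℤ) - y) / q ^ (k:ℤ) := by
    field_simp
  have e2 : 1 - q ^ (k:ℤ) * y⁻¹ = (y - q ^ (k:ℤ)) / y := by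
    field_simp
  rw [e1, e2, one_div_div, div_sub_div _ _ hty hB, div_mul_div_comm,
    ← mul_div_assoc, div_mul_eq_mul_div, div_div_eq_mul_div,
    div_eq_div_iff (mul_ne_zero hq1' (mul_ne_zero hty hB))
      (mul_ne_zero (mul_ne_zero hB hyt) hq1')]
  ring
end

section
/- Let K be a field, let q, y ∈ K be units, let k ∈ ℕ and let N ≥ 2 be an integer, with q^{N−1} ≠ 1 and all denominators below nonzero. Then Σ_{i=−k}^{k} 1/((1 − y·qⁱ)·(1 − q^{N−1−i}·y⁻¹)) = Σ_{i=0}^{N−2} (1/((1 − q^{k−i}·y)·(1 − q^{k+(N−1)−i}·y⁻¹)))·(q^{2k+(N−1)−2i} − 1)/(q^{N−1} − 1). -/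
section Aux

variable {K : Type*} [Field K]

private lemma pkey1 (Q A y : K) (hA : A ≠ 0) (hy : y ≠ 0) (hQ0 : Q ≠ 0) (hQ1 : Q ≠ 1)
    (ha : 1 - y*A ≠ 0) (hb : 1 - (Q/A)*y⁻¹ ≠ 0) :
    1/((1 - y*A)*(1 - (Q/A)*y⁻¹)) = (1/(1 - (A/Q)*y) - 1/(1 - A*y))/(Q - 1) := by
  have e : 1 - (Q/A)*y⁻¹ = -((Q/A)*y⁻¹) * (1 - (A/Q)*y) := by field_simp; ring
  have hc : 1 - (A/Q)*y ≠ 0 := by intro h; apply hb; rw [e, h, mul_zero]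
  have ha' : 1 - A*y ≠ 0 := by rw [mul_comm] at ha; exact ha
  have hQ : Q - 1 ≠ 0 := sub_ne_zero.mpr hQ1
  have hd : -((Q/A)*y⁻¹) ≠ 0 :=
    neg_ne_zero.mpr (mul_ne_zero (div_ne_zero hQ0 hA) (inv_ne_zero hy))
  rw [e, div_sub_div _ _ hc ha', div_div,
    div_eq_div_iff (mul_ne_zero ha (mul_ne_zero hd hc)) (mul_ne_zero (mul_ne_zero hc ha') hQ)]
  field_simp
  ring

private lemma pkey2 (Q B y : K) (hB : B ≠ 0) (hy : y ≠ 0) (hQ0 : Q ≠ 0) (hQ1 : Q ≠ 1)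
    (ha : 1 - B*y ≠ 0) (hb : 1 - B*Q*y⁻¹ ≠ 0) :
    (1/((1 - B*y)*(1 - B*Q*y⁻¹)))*((B^2*Q - 1)/(Q-1))
      = (1/(1 - (B*Q)⁻¹*y) - 1/(1 - B*y))/(Q - 1) := by
  have e : 1 - B*Q*y⁻¹ = -(B*Q*y⁻¹) * (1 - (B*Q)⁻¹*y) := by field_simp; ring
  have hc : 1 - (B*Q)⁻¹*y ≠ 0 := by intro h; apply hb; rw [e, h, mul_zero]
  have hQ : Q - 1 ≠ 0 := sub_ne_zero.mpr hQ1
  have hd : -(B*Q*y⁻¹) ≠ 0 :=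
    neg_ne_zero.mpr (mul_ne_zero (mul_ne_zero hB hQ0) (inv_ne_zero hy))
  rw [e, div_sub_div _ _ hc ha, div_mul_div_comm, one_mul, div_div,
    div_eq_div_iff (mul_ne_zero (mul_ne_zero ha (mul_ne_zero hd hc)) hQ)
      (mul_ne_zero (mul_ne_zero hc ha) hQ)]
  field_simp
  ring

private lemma key1' (q y : K) (hq : q ≠ 0) (hy : y ≠ 0) (M i : ℤ) (hQ1 : q^M ≠ 1)
    (ha : 1 - y*q^i ≠ 0) (hb : 1 - q^(M-i)*y⁻¹ ≠ 0) :
    1/((1 - y*q^i)*(1 - q^(M-i)*y⁻¹)) = (1/(1 - q^(i-M)*y) - 1/(1 - q^i*y))/(q^M - 1) := by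
  rw [zpow_sub₀ hq M i] at hb ⊢
  rw [zpow_sub₀ hq i M]
  exact pkey1 (q^M) (q^i) y (zpow_ne_zero _ hq) hy (zpow_ne_zero _ hq) hQ1 ha hb

private lemma key2' (q y : K) (hq : q ≠ 0) (hy : y ≠ 0) (M a : ℤ) (hQ1 : q^M ≠ 1)
    (ha : 1 - q^a*y ≠ 0) (hb : 1 - q^(a+M)*y⁻¹ ≠ 0) :
    (1/((1 - q^a*y)*(1 - q^(a+M)*y⁻¹)))*((q^(2*a+M)-1)/(q^M-1))
      = (1/(1 - q^(-a-M)*y) - 1/(1 - q^a*y))/(q^M-1) := by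
  have e2 : q^(2*a+M) = (q^a)^2 * (q^M) := by
    rw [zpow_add₀ hq, two_mul, zpow_add₀ hq]; ring
  have e3 : q^(-a-M) = (q^a * q^M)⁻¹ := by
    rw [show -a-M = -(a+M) by ring, zpow_neg, zpow_add₀ hq]
  rw [zpow_add₀ hq a M] at hb ⊢
  rw [e2, e3]
  exact pkey2 (q^M) (q^a) y (zpow_ne_zero _ hq) hy (zpow_ne_zero _ hq) hQ1 ha hb

private lemma range_to_Icc {M : Type*} [AddCommMonoid M] (f : ℤ → M) (a : ℤ) (n : ℕ) :
    ∑ i ∈ Finset.range n, f (a + i) = ∑ i ∈ Finset.Icc a (a + n - 1), f i := by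
  refine Finset.sum_nbij' (fun j : ℕ => a + (j:ℤ)) (fun i : ℤ => (i - a).toNat) ?_ ?_ ?_ ?_ ?_
  · intro j hj; simp only [Finset.mem_range] at hj; simp only [Finset.mem_Icc]; omega
  · intro i hi; simp only [Finset.mem_Icc] at hi; simp only [Finset.mem_range]; omega
  · intro j hj; simp only [Finset.mem_range] at hj
    show ((a + (j:ℤ)) - a).toNat = j; omega
  · intro i hi; simp only [Finset.mem_Icc] at hi
    show a + (((i - a).toNat : ℕ) : ℤ) = i; omega
  · intro j _; rfl

private lemma comb {M : Type*} [AddCommGroup M] (T : ℤ → M) (k n : ℕ) :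
    ∑ i ∈ Finset.Icc (-(k:ℤ)) (k:ℤ), (T (i - n) - T i)
      = ∑ i ∈ Finset.range n, (T ((i:ℤ) - k - n) - T ((k:ℤ) - i)) := by
  have e0 : (k:ℤ) = -(k:ℤ) + (2*k+1:ℕ) - 1 := by push_cast; ring
  rw [Finset.sum_sub_distrib, Finset.sum_sub_distrib]
  have eL1 : ∑ i ∈ Finset.Icc (-(k:ℤ)) (k:ℤ), T (i - n)
      = ∑ i ∈ Finset.range (2*k+1), T (-(k:ℤ) - n + i) := by
    rw [show Finset.Icc (-(k:ℤ)) (k:ℤ) = Finset.Icc (-(k:ℤ)) (-(k:ℤ) + (2*k+1:ℕ) - 1) from by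
      congr 1]
    rw [← range_to_Icc (fun i => T (i - n)) (-(k:ℤ)) (2*k+1)]
    exact Finset.sum_congr rfl fun i _ => congrArg T (by ring)
  have eL2 : ∑ i ∈ Finset.Icc (-(k:ℤ)) (k:ℤ), T i
      = ∑ i ∈ Finset.range (2*k+1), T (-(k:ℤ) + i) := by
    rw [show Finset.Icc (-(k:ℤ)) (k:ℤ) = Finset.Icc (-(k:ℤ)) (-(k:ℤ) + (2*k+1:ℕ) - 1) from by
      congr 1]
    rw [← range_to_Icc T (-(k:ℤ)) (2*k+1)]
  have eR1 : ∑ i ∈ Finset.range n, T ((i:ℤ) - k - n)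
      = ∑ i ∈ Finset.range n, T (-(k:ℤ) - n + i) :=
    Finset.sum_congr rfl fun i _ => congrArg T (by ring)
  have eR2 : ∑ i ∈ Finset.range n, T ((k:ℤ) - i)
      = ∑ i ∈ Finset.range n, T ((k:ℤ) - n + 1 + i) := by
    rw [← Finset.sum_range_reflect]
    refine Finset.sum_congr rfl fun i hi => congrArg T ?_
    simp only [Finset.mem_range] at hi
    omega
  rw [eL1, eL2, eR1, eR2, sub_eq_sub_iff_add_eq_add]
  have big1 : ∑ i ∈ Finset.range (2*k+1+n), T (-(k:ℤ) - n + i)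
      = (∑ i ∈ Finset.range (2*k+1), T (-(k:ℤ) - n + i))
        + ∑ i ∈ Finset.range n, T ((k:ℤ) - n + 1 + i) := by
    rw [Finset.sum_range_add]
    congr 1
    exact Finset.sum_congr rfl fun i _ => congrArg T (by push_cast; ring)
  have big2 : ∑ i ∈ Finset.range (n+(2*k+1)), T (-(k:ℤ) - n + i)
      = (∑ i ∈ Finset.range n, T (-(k:ℤ) - n + i))
        + ∑ i ∈ Finset.range (2*k+1), T (-(k:ℤ) + i) := by
    rw [Finset.sum_range_add]
    congr 1
    exact Finset.sum_congr rfl fun i _ => congrArg T (by push_cast; ring)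
  rw [← big1, ← big2, show 2*k+1+n = n+(2*k+1) from by omega]

end Aux


/-- The finite-sum identity (B.2) of the paper:
`∑_{i=-k}^{k} 1/((1 - y qⁱ)(1 - q^{N-1-i} y⁻¹))
  = ∑_{i=0}^{N-2} (1/((1 - q^{k-i} y)(1 - q^{k+(N-1)-i} y⁻¹))) (q^{2k+(N-1)-2i} - 1)/(q^{N-1} - 1)`
over an arbitrary field, for `N ≥ 2`, `q, y` invertible, `q^{N-1} ≠ 1`, and all
denominators nonzero. -/
theorem finite_sum_identity_hN {K : Type*} [Field K] (q y : K) (k N : ℕ) (hN : 2 ≤ N)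
    (hq0 : q ≠ 0) (hy0 : y ≠ 0) (hqN : q ^ ((N : ℤ) - 1) ≠ 1)
    (h1 : ∀ i : ℤ, -(k : ℤ) ≤ i → i ≤ (k : ℤ) →
      1 - y * q ^ i ≠ 0 ∧ 1 - q ^ ((N : ℤ) - 1 - i) * y⁻¹ ≠ 0)
    (h2 : ∀ i : ℕ, i ≤ N - 2 →
      1 - q ^ ((k : ℤ) - (i : ℤ)) * y ≠ 0 ∧
        1 - q ^ ((k : ℤ) + ((N : ℤ) - 1) - (i : ℤ)) * y⁻¹ ≠ 0) :
    ∑ i ∈ Finset.Icc (-(k : ℤ)) (k : ℤ),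
        1 / ((1 - y * q ^ i) * (1 - q ^ ((N : ℤ) - 1 - i) * y⁻¹)) =
      ∑ i ∈ Finset.range (N - 1),
        (1 / ((1 - q ^ ((k : ℤ) - (i : ℤ)) * y) *
            (1 - q ^ ((k : ℤ) + ((N : ℤ) - 1) - (i : ℤ)) * y⁻¹))) *
          ((q ^ (2 * (k : ℤ) + ((N : ℤ) - 1) - 2 * (i : ℤ)) - 1) / (q ^ ((N : ℤ) - 1) - 1)) := by
  set T : ℤ → K := fun j => 1 / (1 - q ^ j * y) with hT
  have hMn : (N : ℤ) - 1 = ((N - 1 : ℕ) : ℤ) := by omega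
  have L : ∑ i ∈ Finset.Icc (-(k : ℤ)) (k : ℤ),
        1 / ((1 - y * q ^ i) * (1 - q ^ ((N : ℤ) - 1 - i) * y⁻¹))
      = ∑ i ∈ Finset.Icc (-(k : ℤ)) (k : ℤ),
          (T (i - ((N : ℤ) - 1)) - T i) / (q ^ ((N : ℤ) - 1) - 1) := by
    refine Finset.sum_congr rfl fun i hi => ?_
    rw [Finset.mem_Icc] at hi
    obtain ⟨ha, hb⟩ := h1 i hi.1 hi.2
    exact key1' q y hq0 hy0 ((N : ℤ) - 1) i hqN ha hb
  have R : ∑ i ∈ Finset.range (N - 1),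
        (1 / ((1 - q ^ ((k : ℤ) - (i : ℤ)) * y) *
            (1 - q ^ ((k : ℤ) + ((N : ℤ) - 1) - (i : ℤ)) * y⁻¹))) *
          ((q ^ (2 * (k : ℤ) + ((N : ℤ) - 1) - 2 * (i : ℤ)) - 1) / (q ^ ((N : ℤ) - 1) - 1))
      = ∑ i ∈ Finset.range (N - 1),
          (T ((i : ℤ) - k - ((N : ℤ) - 1)) - T ((k : ℤ) - i)) / (q ^ ((N : ℤ) - 1) - 1) := by
    refine Finset.sum_congr rfl fun i hi => ?_
    rw [Finset.mem_range] at hi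
    obtain ⟨ha, hb⟩ := h2 i (by omega)
    rw [show (k : ℤ) + ((N : ℤ) - 1) - (i : ℤ) = ((k : ℤ) - (i : ℤ)) + ((N : ℤ) - 1) from by
      ring] at hb ⊢
    rw [show 2 * (k : ℤ) + ((N : ℤ) - 1) - 2 * (i : ℤ)
        = 2 * ((k : ℤ) - (i : ℤ)) + ((N : ℤ) - 1) from by ring]
    rw [key2' q y hq0 hy0 ((N : ℤ) - 1) ((k : ℤ) - (i : ℤ)) hqN ha hb]
    rw [show -((k : ℤ) - (i : ℤ)) - ((N : ℤ) - 1) = (i : ℤ) - k - ((N : ℤ) - 1) from by ring]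
  rw [L, R, ← Finset.sum_div, ← Finset.sum_div]
  congr 1
  rw [hMn]
  exact comb T k (N - 1)
end

section
/- Let q ∈ ℂ with 0 < |q| < 1 and let y ∈ ℂ be nonzero with y ≠ q^m for every integer m. Then the symmetric limit lim_{k→∞} Σ_{i=−k}^{k} 1/((1 − y·qⁱ)·(1 − q^{−i−1}·y⁻¹)) exists and equals q/(1 − q). -/
/-!
With `f i = (1 - y qⁱ)⁻¹`, each summand equals `q/(1-q) · (f (i+1) - f i)`, so the symmetric
partial sum telescopes to `q/(1-q) · (f (k+1) - f (-k))`. As `k → ∞`, `qᵏ → 0` gives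
`f (k+1) → 1`, and `f (-k) = qᵏ / (qᵏ - y) → 0` because `y ≠ 0`.
-/

open Filter Finset

theorem Int.sum_Icc_sub {M : Type*} [AddCommGroup M] (f : ℤ → M) {a b : ℤ}
    (hab : a ≤ b + 1) :
    ∑ i ∈ Icc a b, (f (i + 1) - f i) = f (b + 1) - f a := by
  induction b, (show a - 1 ≤ b by omega) using Int.leInduction with
  | base => simp
  | succ b hb ih =>
    rw [← insert_Icc_right_eq_Icc_add_one (by omega), sum_insert (by simp), ih (by omega)]
    abel

theorem one_div_mul_one_sub_inv_eq {K : Type*} [Field K] {z q : K} (hz : z ≠ 0) (hq₀ : q ≠ 0)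
    (hq₁ : q ≠ 1) (h₀ : z ≠ 1) (h₁ : z * q ≠ 1) :
    1 / ((1 - z) * (1 - (z * q)⁻¹)) = q / (1 - q) * ((1 - z * q)⁻¹ - (1 - z)⁻¹) := by
  have : 1 - q ≠ 0 := sub_ne_zero.2 hq₁.symm
  have : 1 - z ≠ 0 := sub_ne_zero.2 h₀.symm
  have : z * q - 1 ≠ 0 := sub_ne_zero.2 h₁
  field_simp
  ring

theorem tendsto_inv_one_sub_mul_pow {K : Type*} [NormedField K] {q : K} (hq : ‖q‖ < 1) (y : K) :
    Tendsto (fun k : ℕ => (1 - y * q ^ k)⁻¹) atTop (nhds 1) := by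
  simpa using
    (((tendsto_pow_atTop_nhds_zero_of_norm_lt_one hq).const_mul y).const_sub 1).inv₀ (by simp)

theorem tendsto_inv_one_sub_mul_zpow_neg {K : Type*} [NormedField K] {q y : K} (hq₀ : q ≠ 0)
    (hq : ‖q‖ < 1) (hy : y ≠ 0) :
    Tendsto (fun k : ℕ => (1 - y * q ^ (-(k : ℤ)))⁻¹) atTop (nhds 0) := by
  have hpow := tendsto_pow_atTop_nhds_zero_of_norm_lt_one hq
  have hlim := hpow.div (hpow.sub_const y) (by simpa using hy)
  rw [zero_div] at hlim
  refine hlim.congr fun k => ?_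
  rw [zpow_neg, zpow_natCast, ← inv_div, ← div_eq_mul_inv, one_sub_div (pow_ne_zero k hq₀)]
  rfl

/-- The symmetric limit `lim_{k→∞} ∑_{i=-k}^{k} 1/((1 - y qⁱ)(1 - q^{-i-1} y⁻¹))`
exists and equals `q/(1-q)`, for `0 < |q| < 1` and `y ≠ 0` with `y ≠ qᵐ` for all
integers `m`. -/
theorem symmetric_limit_s0 (q y : ℂ) (hq0 : 0 < ‖q‖) (hq1 : ‖q‖ < 1)
    (hy0 : y ≠ 0) (hy : ∀ m : ℤ, y ≠ q ^ m) :
    Tendsto (fun k : ℕ => ∑ i ∈ Finset.Icc (-(k : ℤ)) (k : ℤ),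
        1 / ((1 - y * q ^ i) * (1 - q ^ (-i - 1) * y⁻¹)))
      atTop (nhds (q / (1 - q))) := by
  have hq₀ : q ≠ 0 := norm_pos_iff.mp hq0
  have hq₁ : q ≠ 1 := by rintro rfl; simp at hq1
  have hyq : ∀ i : ℤ, y * q ^ i ≠ 1 := fun i h =>
    hy (-i) (by rw [zpow_neg, eq_inv_of_mul_eq_one_left h])
  have hterm : ∀ i : ℤ, 1 / ((1 - y * q ^ i) * (1 - q ^ (-i - 1) * y⁻¹))
      = q / (1 - q) * ((1 - y * q ^ (i + 1))⁻¹ - (1 - y * q ^ i)⁻¹) := fun i => by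
    have hyq_succ : y * q ^ i * q ≠ 1 := by rw [mul_assoc, ← zpow_add_one₀ hq₀]; exact hyq (i + 1)
    have hzpow : q ^ (-i - 1) * y⁻¹ = (y * q ^ i * q)⁻¹ := by
      rw [zpow_sub₀ hq₀, zpow_neg, zpow_one]
      field_simp
    rw [hzpow, zpow_add_one₀ hq₀, ← mul_assoc]
    exact one_div_mul_one_sub_inv_eq (mul_ne_zero hy0 (zpow_ne_zero i hq₀)) hq₀ hq₁ (hyq i) hyq_succ
  have hsum : ∀ k : ℕ,
      ∑ i ∈ Icc (-(k : ℤ)) k, 1 / ((1 - y * q ^ i) * (1 - q ^ (-i - 1) * y⁻¹))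
      = q / (1 - q) * ((1 - y * q ^ (k + 1))⁻¹ - (1 - y * q ^ (-(k : ℤ)))⁻¹) := fun k => by
    rw [sum_congr rfl fun i _ => hterm i, ← mul_sum,
      Int.sum_Icc_sub (fun i => (1 - y * q ^ i)⁻¹) (by omega), ← zpow_natCast]
    push_cast
    rfl
  have hlim := (((tendsto_inv_one_sub_mul_pow hq1 y).comp (tendsto_add_atTop_nat 1)).sub
    (tendsto_inv_one_sub_mul_zpow_neg hq₀ hq1 hy0)).const_mul (q / (1 - q))
  rw [sub_zero, mul_one] at hlim
  exact hlim.congr fun k => (hsum k).symm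
end

section
/- Let q ∈ ℂ with 0 < |q| < 1 and let y ∈ ℂ satisfy |q| < |y| < 1/|q| with y ≠ q^s for all s ∈ ℤ. Then the doubly infinite series Σ_{s∈ℤ} q^s·y/(1 − q^s·y)² converges absolutely and equals y/(1−y)² + Σ_{d≥1} (Σ_{k | d} k·(y^k + y^{−k}))·q^d, where the series on the right also converges absolutely. -/
/-!
For `‖w‖ < 1` one has `w / (1 - w)² = ∑_{k ≥ 1} k wᵏ`. Apply this to `w = qˢ y` for `s ≥ 1`, and,
after the symmetry `w⁻¹ / (1 - w⁻¹)² = w / (1 - w)²`, to `w = q^{-s} y⁻¹` for `s ≤ -1`. For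
`z = y` and `z = y⁻¹` we have `‖q z‖ < 1`, so the double series `∑_{i, k ≥ 1} k zᵏ q^{ik}` converges
absolutely: summing it along the rows `i` gives the terms of index `±i`, summing it along the
hyperbolas `ik = d` gives the divisor sums.
-/

open Finset

lemma inv_div_one_sub_inv_sq {K : Type*} [Field K] (w : K) :
    w⁻¹ / (1 - w⁻¹) ^ 2 = w / (1 - w) ^ 2 := by
  rcases eq_or_ne w 0 with rfl | hw
  · simp
  rcases eq_or_ne w 1 with rfl | hw1
  · simp
  have h1w : 1 - w ≠ 0 := sub_ne_zero.2 hw1.symm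
  field_simp
  ring

section Lambert

variable {𝕜 : Type*} [NormedField 𝕜] {q z a : 𝕜}

/-- Indexed by `(i, k)` and zero on the row `i = 0`, so that for `d ≠ 0` the fibre of
`(i, k) ↦ i * k` over `d` is exactly `d.divisorsAntidiagonal`. -/
def lambertTerm (q z : 𝕜) (p : ℕ × ℕ) : 𝕜 :=
  if p.1 = 0 then 0 else p.2 * z ^ p.2 * q ^ (p.1 * p.2)

lemma lambertTerm_succ (q z : 𝕜) (i k : ℕ) :
    lambertTerm q z (i + 1, k) = k * (q ^ (i + 1) * z) ^ k := by
  simp only [lambertTerm, Nat.add_one_ne_zero, if_false, mul_pow, pow_mul]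
  ring

lemma hasSum_lambertTerm_succ_iff :
    HasSum (fun p : ℕ × ℕ ↦ lambertTerm q z (p.1 + 1, p.2)) a ↔ HasSum (lambertTerm q z) a := by
  have hinj : Function.Injective fun p : ℕ × ℕ ↦ (p.1 + 1, p.2) := fun p p' h ↦ by
    simp only [Prod.mk.injEq, Nat.add_right_cancel_iff] at h
    exact Prod.ext h.1 h.2
  refine hinj.hasSum_iff (f := lambertTerm q z) fun ⟨i, k⟩ hp ↦ ?_
  obtain rfl : i = 0 := by
    by_contra hi
    exact hp ⟨(i - 1, k), Prod.ext (Nat.sub_add_cancel (Nat.one_le_iff_ne_zero.2 hi)) rfl⟩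
  simp [lambertTerm]

lemma norm_lambertTerm_succ_le (q z : 𝕜) (i k : ℕ) (hq : ‖q‖ ≤ 1) :
    ‖lambertTerm q z (i + 1, k)‖ ≤ ‖q‖ ^ i * (k * (‖q‖ * ‖z‖) ^ k) := by
  rcases Nat.eq_zero_or_pos k with rfl | hk
  · simp [lambertTerm_succ]
  have hpow : ‖q‖ ^ (i * k) ≤ ‖q‖ ^ i :=
    pow_le_pow_of_le_one (norm_nonneg q) hq (Nat.le_mul_of_pos_right i hk)
  calc ‖lambertTerm q z (i + 1, k)‖ ≤ k * (‖q‖ ^ (i * k) * (‖q‖ * ‖z‖) ^ k) := by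
        rw [lambertTerm_succ, norm_mul, norm_pow, norm_mul, norm_pow, pow_succ, mul_assoc,
          mul_pow, ← pow_mul]
        gcongr
        simpa using Nat.norm_cast_le (α := 𝕜) k
    _ ≤ ‖q‖ ^ i * (k * (‖q‖ * ‖z‖) ^ k) := by
        rw [mul_left_comm]
        gcongr

lemma norm_pow_succ_mul_lt_one (hq : ‖q‖ < 1) (hqz : ‖q‖ * ‖z‖ < 1) (i : ℕ) :
    ‖q ^ (i + 1) * z‖ < 1 := by
  rw [norm_mul, norm_pow, pow_succ']
  calc ‖q‖ * ‖q‖ ^ i * ‖z‖ ≤ ‖q‖ * 1 * ‖z‖ := by gcongr; exact pow_le_one₀ (norm_nonneg q) hq.le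
    _ < 1 := by rwa [mul_one]

lemma hasSum_lambertTerm_rows (hq : ‖q‖ < 1) (hqz : ‖q‖ * ‖z‖ < 1)
    (hf : HasSum (lambertTerm q z) a) :
    HasSum (fun i : ℕ ↦ q ^ (i + 1) * z / (1 - q ^ (i + 1) * z) ^ 2) a :=
  (hasSum_lambertTerm_succ_iff.2 hf).prod_fiberwise fun i ↦ by
    simpa only [lambertTerm_succ] using
      hasSum_coe_mul_geometric_of_norm_lt_one (norm_pow_succ_mul_lt_one hq hqz i)

variable [CompleteSpace 𝕜]

lemma summable_lambertTerm (hq : ‖q‖ < 1) (hqz : ‖q‖ * ‖z‖ < 1) :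
    Summable (lambertTerm q z) := by
  have hr : ‖‖q‖ * ‖z‖‖ < 1 := by rwa [Real.norm_of_nonneg (by positivity)]
  have hbound : Summable fun p : ℕ × ℕ ↦ ‖q‖ ^ p.1 * (p.2 * (‖q‖ * ‖z‖) ^ p.2) := by
    have hk : Summable fun k : ℕ ↦ (k : ℝ) * (‖q‖ * ‖z‖) ^ k := by
      simpa using summable_pow_mul_geometric_of_norm_lt_one 1 hr
    exact (summable_geometric_of_lt_one (norm_nonneg q) hq).mul_of_nonneg hk
      (fun _ ↦ by positivity) (fun _ ↦ by positivity)
  obtain ⟨a, ha⟩ := Summable.of_norm_bounded (f := fun p : ℕ × ℕ ↦ lambertTerm q z (p.1 + 1, p.2))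
    hbound fun p ↦ norm_lambertTerm_succ_le q z p.1 p.2 hq.le
  exact ⟨a, hasSum_lambertTerm_succ_iff.1 ha⟩

lemma hasSum_lambertTerm_divisors (hf : HasSum (lambertTerm q z) a) :
    HasSum (fun d : ℕ ↦ (∑ k ∈ d.divisors, k * z ^ k) * q ^ d) a := by
  suffices key : ∀ d, ∑' p : (fun p : ℕ × ℕ ↦ p.1 * p.2) ⁻¹' {d}, lambertTerm q z p =
      (∑ k ∈ d.divisors, k * z ^ k) * q ^ d by
    simpa only [key] using hf.tsum_fiberwise fun p : ℕ × ℕ ↦ p.1 * p.2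
  intro d
  rcases eq_or_ne d 0 with rfl | hd
  · have hzero (p : (fun p : ℕ × ℕ ↦ p.1 * p.2) ⁻¹' {0}) : lambertTerm q z p = 0 := by
      obtain ⟨⟨i, k⟩, hp⟩ := p
      rcases Nat.mul_eq_zero.1 hp with rfl | rfl <;> simp [lambertTerm]
    simp [hzero]
  have hfiber : (fun p : ℕ × ℕ ↦ p.1 * p.2) ⁻¹' {d} = d.divisorsAntidiagonal := by
    ext p
    simp [hd]
  rw [hfiber, Finset.tsum_subtype', Nat.sum_divisorsAntidiagonal' fun i k ↦ lambertTerm q z (i, k),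
    sum_mul]
  refine sum_congr rfl fun k hk ↦ ?_
  have hkd := Nat.div_mul_cancel (Nat.dvd_of_mem_divisors hk)
  have hdk : d / k ≠ 0 := by
    rintro h
    rw [h, zero_mul] at hkd
    exact hd hkd.symm
  simp [lambertTerm, hdk, hkd]

end Lambert

/-- `HasSum` in `ℂ` is equivalent to absolute convergence; the term `d = 0` on the right vanishes
since `Nat.divisors 0 = ∅`. -/
theorem averaging_operator_identity_general (q y : ℂ)
    (hq1 : ‖q‖ < 1)
    (hylb : ‖q‖ < ‖y‖)
    (hyub : ‖y‖ < (‖q‖)⁻¹) :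
    ∃ T : ℂ,
      HasSum (fun s : ℤ => q ^ s * y / (1 - q ^ s * y) ^ 2) (y / (1 - y) ^ 2 + T) ∧
      HasSum (fun d : ℕ =>
        (∑ k ∈ Nat.divisors d, (k : ℂ) * (y ^ (k : ℤ) + y ^ (-(k : ℤ)))) * q ^ d) T := by
  have hy : 0 < ‖y‖ := (norm_nonneg q).trans_lt hylb
  have hq : 0 < ‖q‖ := inv_pos.1 (hy.trans hyub)
  have hqy : ‖q‖ * ‖y‖ < 1 := by
    calc ‖q‖ * ‖y‖ < ‖q‖ * ‖q‖⁻¹ := by gcongr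
      _ = 1 := mul_inv_cancel₀ hq.ne'
  have hqy' : ‖q‖ * ‖y⁻¹‖ < 1 := by
    rwa [norm_inv, ← div_eq_mul_inv, div_lt_one hy]
  obtain ⟨A, hA⟩ := summable_lambertTerm hq1 hqy
  obtain ⟨B, hB⟩ := summable_lambertTerm hq1 hqy'
  refine ⟨A + B, ?_, ?_⟩
  · have hpos : HasSum (fun n : ℕ ↦
        q ^ ((n : ℤ) + 1) * y / (1 - q ^ ((n : ℤ) + 1) * y) ^ 2) A := by
      simpa only [← zpow_natCast, Nat.cast_add, Nat.cast_one] using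
        hasSum_lambertTerm_rows hq1 hqy hA
    have hneg : HasSum (fun n : ℕ ↦
        q ^ (-((n : ℤ) + 1)) * y / (1 - q ^ (-((n : ℤ) + 1)) * y) ^ 2) B := by
      have hinv (n : ℕ) : q ^ (-((n : ℤ) + 1)) * y = (q ^ (n + 1) * y⁻¹)⁻¹ := by
        rw [zpow_neg, mul_inv, inv_inv]
        norm_cast
      simpa only [hinv, inv_div_one_sub_inv_sq] using hasSum_lambertTerm_rows hq1 hqy' hB
    have hcentre : y / (1 - y) ^ 2 + (A + B) =
        A + q ^ (0 : ℤ) * y / (1 - q ^ (0 : ℤ) * y) ^ 2 + B := by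
      rw [zpow_zero, one_mul]
      ring
    rw [hcentre]
    exact HasSum.of_add_one_of_neg_add_one (f := fun s : ℤ ↦ q ^ s * y / (1 - q ^ s * y) ^ 2)
      hpos hneg
  · refine ((hasSum_lambertTerm_divisors hA).add (hasSum_lambertTerm_divisors hB)).congr_fun
      fun d ↦ ?_
    rw [← add_mul, ← sum_add_distrib]
    simp [zpow_neg, mul_add]

/-- The averaging-operator identity:
`∑_{s∈ℤ} q^s y/(1 - q^s y)² = y/(1-y)² + ∑_{d≥1} (∑_{k|d} k (yᵏ + y⁻ᵏ)) q^d`,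
for `0 < |q| < 1`, `|q| < |y| < 1/|q|` and `y ≠ qˢ` for all `s ∈ ℤ`.
Both series converge (`HasSum` in `ℂ`, equivalent to absolute convergence here);
the term `d = 0` on the right vanishes since `Nat.divisors 0 = ∅`. -/
theorem averaging_operator_identity (q y : ℂ)
    (hq0 : 0 < ‖q‖) (hq1 : ‖q‖ < 1)
    (hy0 : y ≠ 0) (hylb : ‖q‖ < ‖y‖)
    (hyub : ‖y‖ < (‖q‖)⁻¹)
    (hys : ∀ s : ℤ, y ≠ q ^ s) :
    ∃ T : ℂ,
      HasSum (fun s : ℤ => q ^ s * y / (1 - q ^ s * y) ^ 2) (y / (1 - y) ^ 2 + T) ∧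
      HasSum (fun d : ℕ =>
        (∑ k ∈ Nat.divisors d, (k : ℂ) * (y ^ (k : ℤ) + y ^ (-(k : ℤ)))) * q ^ d) T :=
  averaging_operator_identity_general q y hq1 hylb hyub
end
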